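/- Writing u_n = q_1^{a_1}···q_k^{a_k} for distinct primes q_i, set B = ∏ q_i^{a_i−1}. If φ(u_n) = u_m with n > m ≥ 1, then B divides u_{gcd(m,n)}, and hence B divides u_{n−m} when gcd(m,n) divides n−m. -/

import Mathlib

/-!
Each prime power `q ^ a` in `u n` contributes the factor `q ^ (a - 1) * (q - 1)` to `φ (u n)`, so
`B` divides both `u n` and `φ (u n) = u m`. The sequence `u` is a strong divisibility sequence,
exactly as the Fibonacci sequence is: the addition formula and the coprimality of consecutive terms
give `gcd (u m) (u (n + m)) = gcd (u m) (u n)`, which lets Euclid's algorithm run on the indices. So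
`B ∣ gcd (u m) (u n) = u (gcd m n)`, and `u (gcd m n) ∣ u (n - m)` whenever `gcd m n ∣ n - m`.
-/

namespace Nat

theorem prod_primeFactors_pow_factorization_sub_one_dvd (n : ℕ) :
    ∏ q ∈ n.primeFactors, q ^ (n.factorization q - 1) ∣ n := by
  rcases eq_or_ne n 0 with rfl | hn
  · exact dvd_zero _
  conv_rhs => rw [← prod_factorization_pow_eq_self hn, prod_factorization_eq_prod_primeFactors]
  exact Finset.prod_dvd_prod_of_dvd _ _ fun q _ ↦ pow_dvd_pow q (sub_le _ _)

theorem prod_primeFactors_pow_factorization_sub_one_dvd_totient (n : ℕ) :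
    ∏ q ∈ n.primeFactors, q ^ (n.factorization q - 1) ∣ φ n := by
  rcases eq_or_ne n 0 with rfl | hn
  · simp
  rw [totient_eq_prod_factorization hn, prod_factorization_eq_prod_primeFactors]
  exact Finset.prod_dvd_prod_of_dvd _ _ fun q _ ↦ dvd_mul_right _ _

end Nat

def lucasU (P : ℕ) : ℕ → ℕ
  | 0 => 0
  | 1 => 1
  | n + 2 => P * lucasU P (n + 1) + lucasU P n

namespace lucasU

variable (P : ℕ)

@[simp] theorem zero : lucasU P 0 = 0 := rfl
@[simp] theorem one : lucasU P 1 = 1 := rfl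

theorem add_two (n : ℕ) : lucasU P (n + 2) = P * lucasU P (n + 1) + lucasU P n := rfl

theorem coprime_succ (n : ℕ) : (lucasU P n).Coprime (lucasU P (n + 1)) := by
  induction n with
  | zero => simp
  | succ n ih =>
    rw [Nat.Coprime, add_two, Nat.gcd_mul_right_add_right, Nat.gcd_comm]
    exact ih

theorem add_add_one (m n : ℕ) :
    lucasU P (m + n + 1) = lucasU P m * lucasU P n + lucasU P (m + 1) * lucasU P (n + 1) := by
  induction n generalizing m with
  | zero => simp
  | succ n ih =>
    rw [show m + (n + 1) + 1 = m + 1 + n + 1 by ring, ih, add_two, add_two]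
    ring

theorem gcd_add_self (m n : ℕ) :
    (lucasU P m).gcd (lucasU P (n + m)) = (lucasU P m).gcd (lucasU P n) := by
  cases n with
  | zero => simp
  | succ n =>
    calc (lucasU P m).gcd (lucasU P (n + 1 + m))
        = (lucasU P m).gcd (lucasU P n * lucasU P m + lucasU P (n + 1) * lucasU P (m + 1)) := by
          rw [add_right_comm, add_add_one]
      _ = (lucasU P m).gcd (lucasU P (n + 1) * lucasU P (m + 1)) := by
          rw [Nat.gcd_mul_right_add_right]
      _ = (lucasU P m).gcd (lucasU P (n + 1)) :=
          Nat.Coprime.gcd_mul_right_cancel_right _ (coprime_succ P m).symm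

theorem gcd_add_mul_self (m n k : ℕ) :
    (lucasU P m).gcd (lucasU P (n + k * m)) = (lucasU P m).gcd (lucasU P n) := by
  induction k with
  | zero => simp
  | succ k ih => rw [add_mul, one_mul, ← add_assoc, gcd_add_self, ih]

theorem isStrongDvdSequence : Nat.IsStrongDvdSequence (lucasU P) := by
  intro m n
  induction m, n using Nat.gcd.induction with
  | H0 => simp
  | H1 m n _ ih =>
    rw [← Nat.gcd_rec m n] at ih
    conv_lhs => rw [← Nat.mod_add_div' n m]
    rwa [gcd_add_mul_self, Nat.gcd_comm]

end lucasU

theorem eq_lucasU {P : ℕ} {u : ℕ → ℕ} (h0 : u 0 = 0) (h1 : u 1 = 1)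
    (hrec : ∀ n, u (n + 2) = P * u (n + 1) + u n) : u = lucasU P := by
  funext n
  induction n using Nat.twoStepInduction with
  | zero => exact h0
  | one => exact h1
  | more n ih₀ ih₁ => rw [hrec, ih₀, ih₁, lucasU.add_two]

theorem stmt_18_general (P : ℕ) (u : ℕ → ℕ)
    (hu0 : u 0 = 0) (hu1 : u 1 = 1)
    (hrec : ∀ n, 2 ≤ n → u n = P * u (n - 1) + u (n - 2))
    (n m : ℕ)
    (h : Nat.totient (u n) = u m)
    (B : ℕ)
    (hB : B = ∏ q ∈ (u n).primeFactors, q ^ ((u n).factorization q - 1)) :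
    B ∣ u (Nat.gcd m n) ∧ (Nat.gcd m n ∣ n - m → B ∣ u (n - m)) := by
  obtain rfl : u = lucasU P := eq_lucasU hu0 hu1 fun k ↦ hrec (k + 2) (by omega)
  have hB_gcd : B ∣ lucasU P (m.gcd n) := by
    rw [← lucasU.isStrongDvdSequence, ← h, hB]
    exact Nat.dvd_gcd (Nat.prod_primeFactors_pow_factorization_sub_one_dvd_totient _)
      (Nat.prod_primeFactors_pow_factorization_sub_one_dvd _)
  exact ⟨hB_gcd, fun hd ↦ hB_gcd.trans ((lucasU.isStrongDvdSequence P).isDvdSequence _ _ hd)⟩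

theorem stmt_18 (P : ℕ) (hP : 3 ≤ P) (u : ℕ → ℕ)
    (hu0 : u 0 = 0) (hu1 : u 1 = 1)
    (hrec : ∀ n, 2 ≤ n → u n = P * u (n - 1) + u (n - 2))
    (n m : ℕ) (hm : 1 ≤ m) (hmn : m < n)
    (h : Nat.totient (u n) = u m)
    (B : ℕ)
    (hB : B = ∏ q ∈ (u n).primeFactors, q ^ ((u n).factorization q - 1)) :
    B ∣ u (Nat.gcd m n) ∧ (Nat.gcd m n ∣ n - m → B ∣ u (n - m)) :=
  stmt_18_general P u hu0 hu1 hrec n m h B hB
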